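/- Additivity of the complexity measure: for every ℓ ≥ 1 and every sequence a = [t₁ ⋯ t_k], G_ℓ(a) = Σ_{j=1}^{k} G_ℓ(t_j), where G_ℓ(x) is the length of a longest ⊐_ℓ-descending chain starting from x. -/

import Mathlib

/-- First-order terms over a signature `F` and variables `V` (variadic). -/
inductive Tm (F V : Type) : Type
  | var : V → Tm F V
  | app : F → List (Tm F V) → Tm F V

/-- Proper subterm relation: `PSub s t` means `s` is a proper subterm of `t`. -/
inductive PSub {F V : Type} : Tm F V → Tm F V → Prop
  | arg {f : F} {ts : List (Tm F V)} {t : Tm F V} : t ∈ ts → PSub t (Tm.app f ts)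
  | trans {f : F} {ts : List (Tm F V)} {s t : Tm F V} : t ∈ ts → PSub s t → PSub s (Tm.app f ts)

/-- Terms or sequences of terms. -/
abbrev TS (F V : Type) := Tm F V ⊕ List (Tm F V)

/-- The order `⊐_ℓ` on terms and sequences of terms, given a precedence `prec`. -/
inductive Spl {F V : Type} (prec : F → F → Prop) (ℓ : ℕ) : TS F V → TS F V → Prop
  | st {f g : F} {ss ts : List (Tm F V)} :
      prec f g → (∀ t ∈ ts, PSub t (Tm.app f ss)) → ts.length ≤ ℓ →
      Spl prec ℓ (Sum.inl (Tm.app f ss)) (Sum.inl (Tm.app g ts))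
  | sb {f : F} {ss ts : List (Tm F V)} :
      (∀ t ∈ ts, Spl prec ℓ (Sum.inl (Tm.app f ss)) (Sum.inl t)) → ts.length ≤ ℓ →
      Spl prec ℓ (Sum.inl (Tm.app f ss)) (Sum.inr ts)
  | ab {ss ts : List (Tm F V)} (bs : List (List (Tm F V)))
      (i : ℕ) (s : Tm F V) (b : List (Tm F V)) :
      bs.length = ss.length →
      bs.flatten.Perm ts →
      (∀ (j : ℕ) s' b', ss[j]? = some s' → bs[j]? = some b' →
        b' ≠ [s'] → Spl prec ℓ (Sum.inl s') (Sum.inr b')) →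
      ss[i]? = some s → bs[i]? = some b →
      Spl prec ℓ (Sum.inl s) (Sum.inr b) →
      Spl prec ℓ (Sum.inr ss) (Sum.inr ts)

/-- `ChainLen R a n`: there is an `R`-descending chain of length `n` starting at `a`. -/
def ChainLen {α : Type*} (R : α → α → Prop) (a : α) (n : ℕ) : Prop :=
  ∃ f : ℕ → α, f 0 = a ∧ ∀ i < n, R (f i) (f (i + 1))

/-- `IsMaxChainLen R N`: `N a` is the maximal length of an `R`-descending chain from `a`. -/
def IsMaxChainLen {α : Type*} (R : α → α → Prop) (N : α → ℕ) : Prop :=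
  ∀ a, ChainLen R a (N a) ∧ ∀ n, ChainLen R a n → n ≤ N a

/-!
Let `weight N` give a term `t` the value `N t` and a sequence the sum of the values of its
terms. Every `⊐_ℓ`-step between sequences can be performed inside a larger sequence, and for
`ℓ ≥ 1` so can every step of a term viewed as a singleton sequence; running a longest chain of
`t₁` in front of `[t₂ ⋯ t_k]` and then a longest chain of `[t₂ ⋯ t_k]` gives `weight N ≤ N`.
Since `N s > N b` whenever `s ⊐_ℓ b`, this makes `weight N` strictly decreasing along `⊐_ℓ`
(in case (ab) compare block by block), so it also bounds every chain: `N ≤ weight N`.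
-/

namespace ChainLen

variable {α : Type*} {R : α → α → Prop} {a b : α} {n : ℕ}

theorem cons (hab : R a b) (h : ChainLen R b n) : ChainLen R a (n + 1) := by
  obtain ⟨f, hf0, hf⟩ := h
  refine ⟨fun i => if i = 0 then a else f (i - 1), rfl, ?_⟩
  rintro (_ | i) hi
  · simpa [hf0] using hab
  · simpa using hf i (by omega)

theorem tail (h : ChainLen R a (n + 1)) : ∃ b, R a b ∧ ChainLen R b n := by
  obtain ⟨f, hf0, hf⟩ := h
  exact ⟨f 1, hf0 ▸ hf 0 n.succ_pos, fun i => f (i + 1), rfl, fun i hi => hf (i + 1) (by omega)⟩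

theorem map {β : Type*} {S : β → β → Prop} (H : α → β) (hH : ∀ x y, R x y → S (H x) (H y))
    (h : ChainLen R a n) : ChainLen S (H a) n := by
  obtain ⟨f, hf0, hf⟩ := h
  exact ⟨H ∘ f, by simp [hf0], fun i hi => hH _ _ (hf i hi)⟩

theorem le_of_decreasing (M : α → ℕ) (hM : ∀ x y, R x y → M y < M x) (h : ChainLen R a n) :
    n ≤ M a := by
  induction n generalizing a with
  | zero => exact Nat.zero_le _
  | succ n ih =>
    obtain ⟨b, hab, hb⟩ := h.tail
    exact (ih hb).trans_lt (hM a b hab)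

end ChainLen

theorem IsMaxChainLen.lt_of_rel {α : Type*} {R : α → α → Prop} {N : α → ℕ}
    (hN : IsMaxChainLen R N) {a b : α} (h : R a b) : N b < N a :=
  (hN a).2 _ ((hN b).1.cons h)

section Spl

variable {F V : Type} {prec : F → F → Prop} {ℓ : ℕ}

open Sum

def TS.toList : TS F V → List (Tm F V) := Sum.elim (fun s => [s]) id

/-- Clause (ab), with `P` listing each term `s_j` of the left sequence together with its
block `b_j`. -/
theorem Spl.inr_inr_iff {ss ts : List (Tm F V)} :
    Spl prec ℓ (inr ss) (inr ts) ↔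
      ∃ P : List (Tm F V × List (Tm F V)), P.map Prod.fst = ss ∧
        (P.map Prod.snd).flatten.Perm ts ∧
        (∀ p ∈ P, p.2 ≠ [p.1] → Spl prec ℓ (inl p.1) (inr p.2)) ∧
        ∃ p ∈ P, Spl prec ℓ (inl p.1) (inr p.2) := by
  constructor
  · rintro (_ | _ | ⟨bs, i, s, b, hlen, hperm, hweak, hsi, hbi, hstrict⟩)
    refine ⟨ss.zip bs, List.map_fst_zip hlen.ge, (List.map_snd_zip hlen.le).symm ▸ hperm,
      fun p hp => ?_, ⟨s, b⟩, List.mem_iff_getElem?.2 ⟨i, List.getElem?_zip_eq_some.2 ⟨hsi, hbi⟩⟩,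
      hstrict⟩
    obtain ⟨j, hj⟩ := List.mem_iff_getElem?.1 hp
    obtain ⟨hsj, hbj⟩ := List.getElem?_zip_eq_some.1 hj
    exact hweak j _ _ hsj hbj
  · rintro ⟨P, rfl, hperm, hweak, p, hp, hstrict⟩
    obtain ⟨i, hi⟩ := List.mem_iff_getElem?.1 hp
    refine .ab (P.map Prod.snd) i p.1 p.2 (by simp) hperm ?_ (by simp [hi]) (by simp [hi]) hstrict
    intro j s b hs hb hne
    simp only [List.getElem?_map, Option.map_eq_some_iff] at hs hb
    obtain ⟨q, hq, rfl⟩ := hs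
    obtain ⟨q', hq', rfl⟩ := hb
    cases hq.symm.trans hq'
    exact hweak q (List.mem_of_getElem? hq) hne

theorem Spl.append_context (p q : List (Tm F V)) {ss ts : List (Tm F V)}
    (h : Spl prec ℓ (inr ss) (inr ts)) :
    Spl prec ℓ (inr (p ++ ss ++ q)) (inr (p ++ ts ++ q)) := by
  obtain ⟨P, rfl, hperm, hweak, x, hx, hstrict⟩ := Spl.inr_inr_iff.1 h
  let diag : List (Tm F V) → List (Tm F V × List (Tm F V)) := List.map fun u => (u, [u])
  refine Spl.inr_inr_iff.2
    ⟨diag p ++ P ++ diag q, by simp [diag, Function.comp_def], ?_, ?_, x, by simp [hx], hstrict⟩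
  · simpa [diag, ← List.flatMap_def, Function.comp_def] using (hperm.append_left p).append_right q
  · simp only [List.mem_append, List.mem_map, diag]
    rintro _ ((⟨u, -, rfl⟩ | hP) | ⟨u, -, rfl⟩) hne
    exacts [absurd rfl hne, hweak _ hP hne, absurd rfl hne]

theorem Spl.singleton_inr_of_inl {s : Tm F V} {b : List (Tm F V)}
    (h : Spl prec ℓ (inl s) (inr b)) : Spl prec ℓ (inr [s]) (inr b) :=
  Spl.inr_inr_iff.2
    ⟨[(s, b)], rfl, by simp, by simpa using fun _ => h, _, List.mem_singleton_self _, h⟩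

theorem Spl.toList (hℓ : 1 ≤ ℓ) {x y : TS F V} (h : Spl prec ℓ x y) :
    Spl prec ℓ (inr (TS.toList x)) (inr (TS.toList y)) := by
  cases h with
  | st hfg hsub hlen =>
    refine Spl.singleton_inr_of_inl (.sb ?_ (by simpa [TS.toList] using hℓ))
    simpa [TS.toList] using Spl.st hfg hsub hlen
  | sb hts hlen => exact Spl.singleton_inr_of_inl (.sb hts hlen)
  | ab bs i s b hlen hperm hweak hsi hbi hstrict =>
    exact .ab bs i s b hlen hperm hweak hsi hbi hstrict

theorem ChainLen.toList_append (hℓ : 1 ≤ ℓ) {x : TS F V} {ts : List (Tm F V)} {n m : ℕ}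
    (hx : ChainLen (Spl prec ℓ) x n) (hts : ChainLen (Spl prec ℓ) (inr ts) m) :
    ChainLen (Spl prec ℓ) (inr (TS.toList x ++ ts)) (n + m) := by
  induction n generalizing x with
  | zero =>
    rw [Nat.zero_add]
    refine hts.map (fun y => inr (TS.toList x ++ TS.toList y)) fun y z h => ?_
    simpa using (h.toList hℓ).append_context (TS.toList x) []
  | succ n ih =>
    obtain ⟨y, hxy, hy⟩ := hx.tail
    rw [Nat.add_right_comm]
    exact (ih hy).cons (by simpa using (hxy.toList hℓ).append_context [] ts)

def weight (N : TS F V → ℕ) (x : TS F V) : ℕ := ((TS.toList x).map fun t => N (inl t)).sum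

variable {N : TS F V → ℕ}

theorem weight_inr_le (hℓ : 1 ≤ ℓ) (hN : IsMaxChainLen (Spl prec ℓ) N) (ts : List (Tm F V)) :
    weight N (inr ts) ≤ N (inr ts) := by
  induction ts with
  | nil => exact Nat.zero_le _
  | cons t ts ih =>
    calc weight N (inr (t :: ts)) = N (inl t) + weight N (inr ts) := List.sum_cons
      _ ≤ N (inl t) + N (inr ts) := Nat.add_le_add_left ih _
      _ ≤ N (inr (t :: ts)) := (hN _).2 _ ((hN (inl t)).1.toList_append hℓ (hN (inr ts)).1)

theorem weight_inr_lt_of_spl (hℓ : 1 ≤ ℓ) (hN : IsMaxChainLen (Spl prec ℓ) N) {s : Tm F V}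
    {b : List (Tm F V)} (h : Spl prec ℓ (inl s) (inr b)) : weight N (inr b) < N (inl s) :=
  (weight_inr_le hℓ hN b).trans_lt (hN.lt_of_rel h)

theorem Spl.weight_lt_of_inr_inr (hℓ : 1 ≤ ℓ) (hN : IsMaxChainLen (Spl prec ℓ) N)
    {ss ts : List (Tm F V)} (h : Spl prec ℓ (inr ss) (inr ts)) :
    weight N (inr ts) < weight N (inr ss) := by
  obtain ⟨P, rfl, hperm, hweak, hstrict⟩ := Spl.inr_inr_iff.1 h
  have hts : weight N (inr ts) = (P.map fun p => weight N (inr p.2)).sum := by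
    simp only [weight, TS.toList, elim_inr, id, ← hperm.map _ |>.sum_eq, List.map_flatten,
      List.sum_flatten, List.map_map, Function.comp_def]
  have hss : weight N (inr (P.map Prod.fst)) = (P.map fun p => N (inl p.1)).sum := by
    simp [weight, TS.toList, Function.comp_def]
  rw [hts, hss]
  refine List.sum_lt_sum _ _ (fun p hp => ?_) ?_
  · by_cases hp1 : p.2 = [p.1]
    · simp [weight, TS.toList, hp1]
    · exact (weight_inr_lt_of_spl hℓ hN (hweak p hp hp1)).le
  · obtain ⟨p, hp, hsp⟩ := hstrict
    exact ⟨p, hp, weight_inr_lt_of_spl hℓ hN hsp⟩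

theorem Spl.weight_lt (hℓ : 1 ≤ ℓ) (hN : IsMaxChainLen (Spl prec ℓ) N) {x y : TS F V}
    (h : Spl prec ℓ x y) : weight N y < weight N x := by
  cases h with
  | st hfg hsub hlen => simpa [weight, TS.toList] using hN.lt_of_rel (.st hfg hsub hlen)
  | sb hts hlen => simpa [weight, TS.toList] using weight_inr_lt_of_spl hℓ hN (.sb hts hlen)
  | ab bs i s b hlen hperm hweak hsi hbi hstrict =>
    exact Spl.weight_lt_of_inr_inr hℓ hN (.ab bs i s b hlen hperm hweak hsi hbi hstrict)

end Spl

/-- additivity of the complexity measure `G_ℓ` on sequences. -/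
theorem G_additive {F V : Type} (prec : F → F → Prop) (ℓ : ℕ) (hℓ : 1 ≤ ℓ)
    (N : TS F V → ℕ) (hN : IsMaxChainLen (Spl prec ℓ) N)
    (ts : List (Tm F V)) :
    N (Sum.inr ts) = (ts.map (fun t => N (Sum.inl t))).sum :=
  le_antisymm
    ((hN (.inr ts)).1.le_of_decreasing (weight N) fun _ _ h => h.weight_lt hℓ hN)
    (weight_inr_le hℓ hN ts)
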